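/- (Nesting of Whitney intervals for nested open sets.) Let Ω' ⊆ Ω be open sets with ∅ ≠ Ω' and Ω ⊊ ℝ₊ = (0,∞). Let I ∈ W(Ω) and I' ∈ W(Ω'), where W(U) denotes the collection of dyadic intervals J that are maximal subject to 3J ⊆ U and 5J ⊄ U. Then I ⊊ I' is impossible; that is, no Whitney interval of the larger set Ω is strictly contained in a Whitney interval of the smaller set Ω'. -/

import Mathlib

open MeasureTheory Set ENNReal

/-- The dyadic interval `(m 2^k, (m+1) 2^k)` of `ℝ₊`. -/
def dyad (k : ℤ) (m : ℕ) : Set ℝ := Set.Ioo ((m : ℝ) * 2 ^ k) (((m : ℝ) + 1) * 2 ^ k)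

/-- The Carleson box `Ĵ = J × (0, |J|]` of the dyadic interval `J = (m 2^k, (m+1) 2^k)`. -/
def dyadBox (k : ℤ) (m : ℕ) : Set (ℝ × ℝ) := dyad k m ×ˢ Set.Ioc (0 : ℝ) (2 ^ k)

/-- The dyadic Carleson-box maximal function `M_ν ψ`. -/
noncomputable def Mdyad (ν : Measure (ℝ × ℝ)) (ψ : ℝ × ℝ → ℝ) (p : ℝ × ℝ) : ℝ≥0∞ :=
  ⨆ (k : ℤ) (m : ℕ) (_ : p ∈ dyadBox k m ∧ ν (dyadBox k m) ≠ 0),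
    (ν (dyadBox k m))⁻¹ * ∫⁻ q in dyadBox k m, ENNReal.ofReal |ψ q| ∂ν

/-- The triple `3I` of the interval `I = (a, b)`, intersected with `ℝ₊`. -/
def tri (a b : ℝ) : Set ℝ :=
  Set.Ioo ((a + b) / 2 - 3 * (b - a) / 2) ((a + b) / 2 + 3 * (b - a) / 2) ∩ Set.Ioi 0

/-- The quintuple `5I` of the interval `I = (a, b)`, intersected with `ℝ₊`. -/
def quint (a b : ℝ) : Set ℝ :=
  Set.Ioo ((a + b) / 2 - 5 * (b - a) / 2) ((a + b) / 2 + 5 * (b - a) / 2) ∩ Set.Ioi 0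

/-- The triple `3I` of the dyadic interval indexed by `(k, m)`. -/
def triD (k : ℤ) (m : ℕ) : Set ℝ := tri ((m : ℝ) * 2 ^ k) (((m : ℝ) + 1) * 2 ^ k)

/-- The quintuple `5I` of the dyadic interval indexed by `(k, m)`. -/
def quintD (k : ℤ) (m : ℕ) : Set ℝ := quint ((m : ℝ) * 2 ^ k) (((m : ℝ) + 1) * 2 ^ k)

/-- The dyadic interval indexed by `(k, m)` is a Whitney interval of the open set `Ω`:
it is maximal among dyadic intervals `I` subject to `3I ⊆ Ω` and `5I ⊄ Ω`. -/
def IsWhitney (Ω : Set ℝ) (k : ℤ) (m : ℕ) : Prop :=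
  triD k m ⊆ Ω ∧ ¬ quintD k m ⊆ Ω ∧
    ∀ k' : ℤ, ∀ m' : ℕ, dyad k m ⊂ dyad k' m' →
      ¬ (triD k' m' ⊆ Ω ∧ ¬ quintD k' m' ⊆ Ω)

/-!
A strict dyadic inclusion `I ⊊ I'` forces `|I'| ≥ 2|I|`, and then `5I ⊆ 3I'`.
Hence `5I ⊆ 3I' ⊆ Ω' ⊆ Ω`, contradicting `5I ⊄ Ω` for the Whitney interval `I` of `Ω`.
-/

theorem quint_subset_tri {a b a' b' : ℝ} (ha : a' ≤ a) (hb : b ≤ b')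
    (hlen : 2 * (b - a) ≤ b' - a') : quint a b ⊆ tri a' b' :=
  inter_subset_inter (Ioo_subset_Ioo (by linarith) (by linarith)) subset_rfl

theorem dyad_subset_dyad_iff {k k' : ℤ} {m m' : ℕ} :
    dyad k m ⊆ dyad k' m' ↔
      (m' : ℝ) * 2 ^ k' ≤ m * 2 ^ k ∧ ((m : ℝ) + 1) * 2 ^ k ≤ (m' + 1) * 2 ^ k' :=
  Ioo_subset_Ioo_iff (mul_lt_mul_of_pos_right (lt_add_one _) (by positivity))

theorem lt_of_dyad_ssubset {k k' : ℤ} {m m' : ℕ} (h : dyad k m ⊂ dyad k' m') : k < k' := by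
  obtain ⟨hleft, hright⟩ := dyad_subset_dyad_iff.1 h.1
  by_contra! hk
  have hpow : (2 : ℝ) ^ k' ≤ 2 ^ k := zpow_le_zpow_right₀ one_le_two hk
  have hlen : (2 : ℝ) ^ k = 2 ^ k' := by linarith
  rw [hlen] at hleft hright
  apply h.2
  rw [dyad_subset_dyad_iff, hlen]
  constructor <;> linarith

theorem two_mul_zpow_le_of_dyad_ssubset {k k' : ℤ} {m m' : ℕ} (h : dyad k m ⊂ dyad k' m') :
    2 * (2 : ℝ) ^ k ≤ 2 ^ k' := by
  rw [mul_comm, ← zpow_add_one₀ two_ne_zero]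
  exact zpow_le_zpow_right₀ one_le_two (lt_of_dyad_ssubset h)

theorem quintD_subset_triD_of_dyad_ssubset {k k' : ℤ} {m m' : ℕ}
    (h : dyad k m ⊂ dyad k' m') : quintD k m ⊆ triD k' m' := by
  obtain ⟨hleft, hright⟩ := dyad_subset_dyad_iff.1 h.1
  have hlen := two_mul_zpow_le_of_dyad_ssubset h
  exact quint_subset_tri hleft hright (by linarith)

theorem whitney_intervals_no_strict_nesting_general (Ω Ω' : Set ℝ)
    (hss : Ω' ⊆ Ω)
    (k : ℤ) (m : ℕ) (k' : ℤ) (m' : ℕ)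
    (hI : IsWhitney Ω k m) (hI' : IsWhitney Ω' k' m') :
    ¬ dyad k m ⊂ dyad k' m' := fun h =>
  hI.2.1 ((quintD_subset_triD_of_dyad_ssubset h).trans (hI'.1.trans hss))

/-- Nesting of Whitney intervals for nested open sets: if
`Ω' ⊆ Ω`, `I ∈ W(Ω)` and `I' ∈ W(Ω')`, then `I ⊊ I'` is impossible. -/
theorem whitney_intervals_no_strict_nesting (Ω Ω' : Set ℝ)
    (hopen : IsOpen Ω) (hopen' : IsOpen Ω') (hss : Ω' ⊆ Ω) (hne' : Ω'.Nonempty)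
    (hsub : Ω ⊆ Set.Ioi 0) (hproper : Ω ≠ Set.Ioi 0)
    (k : ℤ) (m : ℕ) (k' : ℤ) (m' : ℕ)
    (hI : IsWhitney Ω k m) (hI' : IsWhitney Ω' k' m') :
    ¬ dyad k m ⊂ dyad k' m' :=
  whitney_intervals_no_strict_nesting_general Ω Ω' hss k m k' m' hI hI'
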